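/- On (ℂ²)^{⊗3}, the permutation operators of S₃ satisfy P₃((12)) + P₃((13)) + P₃((23)) = I + P₃((123)) + P₃((132)); consequently the projector onto the symmetric subspace of three qubits can be written as Π₃ = (1/3)·(I + P₃((123)) + P₃((132))). -/
import Mathlib


open Matrix

/-- Permutation matrix on `(ℂ^d)^{⊗n}` permuting tensor factors. -/
noncomputable def permMat (n d : ℕ) (σ : Equiv.Perm (Fin n)) :
    Matrix (Fin n → Fin d) (Fin n → Fin d) ℂ :=
  Matrix.of fun v w => if v = w ∘ σ then 1 else 0

/-- Projector onto the symmetric subspace of `(ℂ^d)^{⊗n}`. -/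
noncomputable def symProj (n d : ℕ) :
    Matrix (Fin n → Fin d) (Fin n → Fin d) ℂ :=
  ((n.factorial : ℂ)⁻¹) • ∑ σ : Equiv.Perm (Fin n), permMat n d σ

lemma permMat_one (n d : ℕ) : permMat n d 1 = 1 := by
  ext v w
  simp [permMat, Matrix.one_apply]

lemma key : ∀ v w : Fin 3 → Fin 2,
    ((if v = w ∘ (Equiv.swap 0 1) then 1 else 0) + (if v = w ∘ (Equiv.swap 0 2) then 1 else 0)
      + (if v = w ∘ (Equiv.swap 1 2) then 1 else 0) : ℕ)
    = (if v = w then 1 else 0) + (if v = w ∘ (finRotate 3) then 1 else 0)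
      + (if v = w ∘ ⇑((finRotate 3)⁻¹) then 1 else 0) := by decide

lemma part1 :
    permMat 3 2 (Equiv.swap 0 1) + permMat 3 2 (Equiv.swap 0 2)
        + permMat 3 2 (Equiv.swap 1 2)
      = 1 + permMat 3 2 (finRotate 3) + permMat 3 2 ((finRotate 3)⁻¹) := by
  ext v w
  have h := congrArg (fun n : ℕ => (n : ℂ)) (key v w)
  push_cast [apply_ite (fun n : ℕ => (n : ℂ))] at h
  simpa [permMat, Matrix.add_apply, Matrix.one_apply] using h

lemma univPerm : (Finset.univ : Finset (Equiv.Perm (Fin 3)))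
    = {1, Equiv.swap 0 1, Equiv.swap 0 2, Equiv.swap 1 2, finRotate 3, (finRotate 3)⁻¹} := by
  decide

/-- On three qubits,
`P₃((12)) + P₃((13)) + P₃((23)) = I + P₃((123)) + P₃((132))`, and consequently
`Π₃ = (1/3)·(I + P₃((123)) + P₃((132)))`. -/
theorem stmt13 :
    (permMat 3 2 (Equiv.swap 0 1) + permMat 3 2 (Equiv.swap 0 2)
        + permMat 3 2 (Equiv.swap 1 2)
      = 1 + permMat 3 2 (finRotate 3) + permMat 3 2 ((finRotate 3)⁻¹))
    ∧ symProj 3 2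
      = ((1 : ℂ) / 3) • (1 + permMat 3 2 (finRotate 3) + permMat 3 2 ((finRotate 3)⁻¹)) := by
  refine ⟨part1, ?_⟩
  have hsum : ∑ σ : Equiv.Perm (Fin 3), permMat 3 2 σ
      = permMat 3 2 1 + permMat 3 2 (Equiv.swap 0 1) + permMat 3 2 (Equiv.swap 0 2)
        + permMat 3 2 (Equiv.swap 1 2) + permMat 3 2 (finRotate 3)
        + permMat 3 2 ((finRotate 3)⁻¹) := by
    rw [univPerm]
    rw [Finset.sum_insert (by decide), Finset.sum_insert (by decide),
      Finset.sum_insert (by decide), Finset.sum_insert (by decide),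
      Finset.sum_insert (by decide), Finset.sum_singleton]
    abel
  unfold symProj
  rw [hsum, permMat_one]
  have : (1 : Matrix (Fin 3 → Fin 2) (Fin 3 → Fin 2) ℂ)
      + permMat 3 2 (Equiv.swap 0 1) + permMat 3 2 (Equiv.swap 0 2)
      + permMat 3 2 (Equiv.swap 1 2) + permMat 3 2 (finRotate 3)
      + permMat 3 2 ((finRotate 3)⁻¹)
      = (2 : ℂ) • (1 + permMat 3 2 (finRotate 3) + permMat 3 2 ((finRotate 3)⁻¹)) := by
    have h := part1
    rw [show (1 : Matrix (Fin 3 → Fin 2) (Fin 3 → Fin 2) ℂ)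
        + permMat 3 2 (Equiv.swap 0 1) + permMat 3 2 (Equiv.swap 0 2)
        + permMat 3 2 (Equiv.swap 1 2) + permMat 3 2 (finRotate 3)
        + permMat 3 2 ((finRotate 3)⁻¹)
        = 1 + (permMat 3 2 (Equiv.swap 0 1) + permMat 3 2 (Equiv.swap 0 2)
          + permMat 3 2 (Equiv.swap 1 2)) + permMat 3 2 (finRotate 3)
          + permMat 3 2 ((finRotate 3)⁻¹) by abel, h]
    rw [two_smul]
    abel
  rw [this, smul_smul]
  norm_num [Nat.factorial]
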